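/- Let n ≥ m ≥ 1 and k ≥ 2 be integers such that k − 1 is divisible by n + m + 1. If n is even or m is odd, then r(S(n,m); k) ≥ kn + m + 2. -/

import Mathlib

open SimpleGraph

/-- The double star `S(n,m)`: two adjacent centers `0` and `1`, with `n` leaves
attached to `0` (vertices `2,…,n+1`) and `m` leaves attached to `1`
(vertices `n+2,…,n+m+1`). -/
def doubleStar (n m : ℕ) : SimpleGraph (Fin (n + m + 2)) :=
  SimpleGraph.fromRel (fun u v =>
    (u.val = 0 ∧ v.val = 1) ∨
    (u.val = 0 ∧ 2 ≤ v.val ∧ v.val ≤ n + 1) ∨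
    (u.val = 1 ∧ n + 2 ≤ v.val))

/-- The star `K_{1,n}` with center `0` and `n` leaves. -/
def starGraph (n : ℕ) : SimpleGraph (Fin (n + 1)) :=
  SimpleGraph.fromRel (fun u _ => u.val = 0)

/-- The subdivided star `S_n^m`, obtained from `K_{1,n}` by subdividing `m` edges each
exactly once: center `0`; subdivision vertices `1,…,m`; for `1 ≤ i ≤ m` the vertex `m+i`
is the leaf beyond subdivision vertex `i`; vertices `2m+1,…,n+m` are ordinary leaves. -/
def subdividedStar (n m : ℕ) : SimpleGraph (Fin (n + m + 1)) :=
  SimpleGraph.fromRel (fun u v =>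
    (u.val = 0 ∧ 1 ≤ v.val ∧ v.val ≤ m) ∨
    (1 ≤ u.val ∧ u.val ≤ m ∧ v.val = u.val + m) ∨
    (u.val = 0 ∧ 2 * m + 1 ≤ v.val))

/-- `K_N` colored by `c` with `k` colors contains a monochromatic copy of `H`. -/
def HasMonoCopy {W : Type} (H : SimpleGraph W) {N : ℕ} {α : Type}
    (c : Sym2 (Fin N) → α) : Prop :=
  ∃ (f : W ↪ Fin N) (i : α), ∀ v w : W, H.Adj v w → c s(f v, f w) = i

/-- Every `k`-coloring of the edges of `K_N` contains a monochromatic copy of `H`. -/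
def IsRamsey {W : Type} (H : SimpleGraph W) (k N : ℕ) : Prop :=
  ∀ c : Sym2 (Fin N) → Fin k, HasMonoCopy H c

/-- The `k`-color Ramsey number of `H`. -/
noncomputable def ramseyNumber {W : Type} (H : SimpleGraph W) (k : ℕ) : ℕ :=
  sInf {N | IsRamsey H k N}

/-- There is a list assignment of `k` colors to each edge of `K_N` such that every
coloring from the lists contains a monochromatic copy of `H`. -/
def IsListRamsey {W : Type} (H : SimpleGraph W) (k N : ℕ) : Prop :=
  ∃ L : Sym2 (Fin N) → Finset ℕ, (∀ e, (L e).card = k) ∧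
    ∀ c : Sym2 (Fin N) → ℕ, (∀ e, c e ∈ L e) → HasMonoCopy H c

/-- The `k`-color list Ramsey number of `H`. -/
noncomputable def listRamseyNumber {W : Type} (H : SimpleGraph W) (k : ℕ) : ℕ :=
  sInf {N | IsListRamsey H k N}

/-!
Write `s = n + m + 1` and `q = t n + 1`, so that `k = t s + 1` and `k n + m + 1 = q s`.
A copy of `S(n,m)` is connected, has `s + 1` vertices and a vertex of degree `n + 1`, so it is
not monochromatic in a colour class that is a disjoint union of cliques of order at most `s`, nor
in one of maximum degree at most `n`. On `ZMod q × ZMod s` the columns `{a} × ZMod s` are such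
cliques; every other edge gets a label that each vertex sees at most `c` times, and the labels are
grouped into colours of `n / c` labels each. For `n` even the label of `xy` is `±(x - y)`
(so `c = 2`); for `q` even it is a round-robin 1-factorisation of `K_q` paired with `x₂ + y₂`.
For `q` and `n` odd the diagonals `a - b = const` form a second family of cliques, and the labels
then fit into `t s - 1` colours because `m ≥ 1`.

Since `ramseyNumber` is an `sInf` (which is `0` for the empty set), some `N` with `IsRamsey` is
needed as well: by double counting, in a colouring of a large `K_N` some edge has both ends of
degree at least `s` in its own colour, and such an edge spans a monochromatic `S(n,m)`.
-/

open Finset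

variable {W V Λ : Type}

lemma IsRamsey.exists_monochromatic [Fintype V] {H : SimpleGraph W} {k : ℕ}
    (hR : IsRamsey H k (Fintype.card V)) (col : V → V → ℕ)
    (hsymm : ∀ x y, col x y = col y x) (hlt : ∀ x y, col x y < k) :
    ∃ (F : W ↪ V) (i : ℕ), ∀ v w, H.Adj v w → col (F v) (F w) = i := by
  let e := Fintype.equivFin V
  obtain ⟨f, i, hf⟩ := hR (Sym2.lift ⟨fun a b => ⟨col (e.symm a) (e.symm b), hlt _ _⟩,
    fun a b => Fin.ext (hsymm _ _)⟩)
  exact ⟨f.trans e.symm.toEmbedding, i, fun v w hvw => congrArg Fin.val (hf v w hvw)⟩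

lemma IsRamsey.mono {H : SimpleGraph W} {k N N' : ℕ} (h : IsRamsey H k N) (hle : N ≤ N') :
    IsRamsey H k N' := by
  intro c
  obtain ⟨f, i, hf⟩ := h (fun e => c (e.map (Fin.castLE hle)))
  exact ⟨f.trans (Fin.castLEEmb hle), i, fun v w hvw => by simpa using hf v w hvw⟩

lemma SimpleGraph.Preconnected.eq_of_forall_adj {H : SimpleGraph W} (hH : H.Preconnected)
    {β : Type} {f : W → β} (hf : ∀ v w, H.Adj v w → f v = f w) (v w : W) : f v = f w := by
  simpa [Relation.reflTransGen_eq_self] using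
    Relation.ReflTransGen.lift f hf _ _ ((reachable_iff_reflTransGen v w).1 (hH v w))

lemma SimpleGraph.Connected.card_le_ncard_of_forall_adj [Fintype W] [Finite V]
    {H : SimpleGraph W} (hH : H.Connected) {β : Type} (F : W ↪ V) {b : V → β}
    (hb : ∀ v v', H.Adj v v' → b (F v) = b (F v')) (w : W) :
    Fintype.card W ≤ {x | b x = b (F w)}.ncard := by
  rw [← Nat.card_eq_fintype_card, ← Set.ncard_univ]
  exact Set.ncard_le_ncard_of_injOn F
    (fun v _ => hH.preconnected.eq_of_forall_adj (f := b ∘ F) hb v w) F.injective.injOn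

lemma Finset.exists_grouping [DecidableEq Λ] (T : Finset Λ) {R g : ℕ} (hT : #T ≤ R * g)
    (hg : 0 < g) : ∃ π : Λ → ℕ, (∀ l ∈ T, π l < R) ∧ ∀ j, #{l ∈ T | π l = j} ≤ g := by
  let idx : Λ → ℕ := fun l => if h : l ∈ T then T.equivFin ⟨l, h⟩ else 0
  have hidx_lt : ∀ l ∈ T, idx l < R * g := fun l hl => by
    simpa [idx, hl] using (T.equivFin ⟨l, hl⟩).2.trans_le hT
  refine ⟨fun l => idx l / g, fun l hl => Nat.div_lt_of_lt_mul (by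
    simpa [mul_comm] using hidx_lt l hl), fun j => ?_⟩
  calc #{l ∈ T | idx l / g = j} ≤ #(Ico (j * g) (j * g + g)) := by
        refine card_le_card_of_injOn idx (fun l hl => ?_) (fun l hl l' hl' h => ?_)
        · obtain ⟨-, rfl⟩ := mem_filter.1 hl
          simp only [coe_Ico, Set.mem_Ico]
          exact ⟨Nat.div_mul_le_self _ _, by have := Nat.lt_div_mul_add (a := idx l) hg; omega⟩
        · have hl := (mem_filter.1 hl).1
          have hl' := (mem_filter.1 hl').1
          simpa [idx, hl, hl', Fin.val_inj] using h
    _ = g := by simp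

lemma Finset.card_filter_comp_le_mul [DecidableEq Λ] {A : Finset V} {T : Finset Λ}
    {ℓ : V → Λ} {π : Λ → ℕ} {c g j : ℕ} (hℓT : ∀ y ∈ A, ℓ y ∈ T)
    (hmult : ∀ l, #{y ∈ A | ℓ y = l} ≤ c) (hπ : #{l ∈ T | π l = j} ≤ g) :
    #{y ∈ A | π (ℓ y) = j} ≤ c * g := by
  calc #{y ∈ A | π (ℓ y) = j} ≤ c * #{l ∈ T | π l = j} := by
        refine card_le_mul_card_image_of_maps_to (f := ℓ) (fun y hy => ?_) c (fun l _ => ?_)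
        · obtain ⟨hyA, hy⟩ := mem_filter.1 hy
          exact mem_filter.2 ⟨hℓT y hyA, hy⟩
        · refine (card_le_card fun y hy => ?_).trans (hmult l)
          simp only [mem_filter] at hy ⊢
          exact ⟨hy.1.1, hy.2⟩
    _ ≤ c * g := Nat.mul_le_mul_left c hπ

/-- `blk x y = some j` says that `x` and `y` lie in a common block of the `j`-th partition,
whose blocks have at most `s` elements; the remaining pairs are labelled, every label occurring
at most `c` times at each vertex. -/
structure BlockLabelling (V Λ : Type) [Fintype V] [DecidableEq V] [DecidableEq Λ]
    (p s c : ℕ) where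
  blk : V → V → Option (Fin p)
  blk_comm : ∀ x y, blk x y = blk y x
  blocks : ∀ j, ∃ (β : Type) (b : V → β), (∀ x y, blk x y = some j → b x = b y) ∧
    ∀ z, {x | b x = z}.ncard ≤ s
  label : V → V → Λ
  label_comm : ∀ x y, blk x y = none → label x y = label y x
  labels : Finset Λ
  label_mem : ∀ x y, blk x y = none → label x y ∈ labels
  card_label_le : ∀ x l, #{y | blk x y = none ∧ label x y = l} ≤ c

namespace BlockLabelling

variable [Fintype V] [DecidableEq V] [DecidableEq Λ] {p s c : ℕ}

def colouring (L : BlockLabelling V Λ p s c) (π : Λ → ℕ) (x y : V) : ℕ :=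
  (L.blk x y).elim (p + π (L.label x y)) Fin.val

variable (L : BlockLabelling V Λ p s c) {π : Λ → ℕ}

lemma colouring_comm (x y : V) : L.colouring π x y = L.colouring π y x := by
  simp only [colouring, L.blk_comm y x]
  cases h : L.blk x y with
  | none => simp [L.label_comm x y h]
  | some j => simp

lemma colouring_lt {R : ℕ} (hπR : ∀ l ∈ L.labels, π l < R) (x y : V) :
    L.colouring π x y < p + R := by
  cases h : L.blk x y with
  | none => simpa [colouring, h] using hπR _ (L.label_mem x y h)
  | some j => simp only [colouring, h, Option.elim_some]; omega

lemma blk_eq_some_of_colouring_eq {x y : V} {i : ℕ} (h : L.colouring π x y = i) (hi : i < p) :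
    L.blk x y = some ⟨i, hi⟩ := by
  cases hb : L.blk x y with
  | none => simp only [colouring, hb, Option.elim_none] at h; omega
  | some j => simp only [colouring, hb, Option.elim_some] at h; exact congrArg some (Fin.ext h)

lemma blk_eq_none_of_colouring_eq {x y : V} {i : ℕ} (h : L.colouring π x y = i) (hi : p ≤ i) :
    L.blk x y = none ∧ π (L.label x y) = i - p := by
  cases hb : L.blk x y with
  | none => simp only [colouring, hb, Option.elim_none] at h; exact ⟨rfl, by omega⟩
  | some j => simp only [colouring, hb, Option.elim_some] at h; omega

theorem not_isRamsey [Fintype W] {H : SimpleGraph W} (hH : H.Connected) {g R : ℕ} (hg : 0 < g)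
    (hT : #L.labels ≤ R * g) (hW : s < Fintype.card W) {w : W} {S : Finset W}
    (hS : c * g < #S) (hwS : ∀ u ∈ S, H.Adj w u) :
    ¬ IsRamsey H (p + R) (Fintype.card V) := by
  intro hR
  obtain ⟨π, hπR, hπ⟩ := L.labels.exists_grouping hT hg
  obtain ⟨F, i, hF⟩ := hR.exists_monochromatic (L.colouring π) L.colouring_comm
    (L.colouring_lt hπR)
  by_cases hi : i < p
  · obtain ⟨β, b, hb, hfib⟩ := L.blocks ⟨i, hi⟩
    have := hH.card_le_ncard_of_forall_adj F
      (fun v v' hvv' => hb _ _ (L.blk_eq_some_of_colouring_eq (hF v v' hvv') hi)) w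
    have := hfib (b (F w))
    omega
  · have hS_sub : S.map F ⊆
        ({y | L.blk (F w) y = none} : Finset V).filter (fun y => π (L.label (F w) y) = i - p) := by
      intro y hy
      obtain ⟨u, hu, rfl⟩ := mem_map.1 hy
      simpa using L.blk_eq_none_of_colouring_eq (hF w u (hwS u hu)) (by omega)
    have := (card_le_card hS_sub).trans (card_filter_comp_le_mul (fun y hy => L.label_mem _ y
      (mem_filter.1 hy).2) (fun l => by simpa only [filter_filter] using L.card_label_le (F w) l)
      (hπ _))
    rw [card_map] at this
    omega

end BlockLabelling

section DoubleStar

variable {n m : ℕ}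

lemma doubleStar_adj_zero {j : Fin (n + m + 2)} (h1 : 1 ≤ j.val) (h2 : j.val ≤ n + 1) :
    (doubleStar n m).Adj 0 j := by
  simp only [doubleStar, fromRel_adj, ne_eq, Fin.ext_iff, Fin.val_zero, true_and]
  omega

lemma doubleStar_adj_one {j : Fin (n + m + 2)} (h : n + 2 ≤ j.val) :
    (doubleStar n m).Adj 1 j := by
  simp only [doubleStar, fromRel_adj, ne_eq, Fin.ext_iff, Fin.val_one, true_and]
  omega

lemma doubleStar_connected : (doubleStar n m).Connected := by
  refine (connected_iff_exists_forall_reachable _).2 ⟨0, fun j => ?_⟩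
  by_cases h0 : j.val = 0
  · rw [show j = 0 from Fin.ext h0]
  by_cases hj : j.val ≤ n + 1
  · exact (doubleStar_adj_zero (by omega) hj).reachable
  · exact (doubleStar_adj_zero (j := 1) (by simp) (by simp)).reachable.trans
      (doubleStar_adj_one (by omega)).reachable

lemma doubleStar_exists_adj_zero :
    ∃ S : Finset (Fin (n + m + 2)), #S = n + 1 ∧ ∀ u ∈ S, (doubleStar n m).Adj 0 u :=
  ⟨univ.map ((Fin.castLEEmb (show n + 1 ≤ n + m + 1 by omega)).trans
      (Fin.succEmb (n + m + 1))), by simp, fun u hu => by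
      obtain ⟨j, -, rfl⟩ := mem_map.1 hu
      exact doubleStar_adj_zero (by simp) (by simp; omega)⟩

theorem BlockLabelling.not_isRamsey_doubleStar [Fintype V] [DecidableEq V] [DecidableEq Λ]
    {p c : ℕ} (L : BlockLabelling V Λ p (n + m + 1) c) {g R : ℕ} (hg : 0 < g) (hcg : c * g ≤ n)
    (hT : #L.labels ≤ R * g) : ¬ IsRamsey (doubleStar n m) (p + R) (Fintype.card V) := by
  obtain ⟨S, hS, hS0⟩ := doubleStar_exists_adj_zero (n := n) (m := m)
  exact L.not_isRamsey doubleStar_connected hg hT (by simp) (by omega) hS0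

variable {N : ℕ} {α : Type}

lemma hasMonoCopy_doubleStar_of_injective (c : Sym2 (Fin N) → α) {i : α} {u v : Fin N}
    {x : Fin n → Fin N} {y : Fin m → Fin N}
    (hinj : Function.Injective
      (Fin.cons u (Fin.cons v (Fin.append x y)) : Fin (n + m + 2) → Fin N))
    (huv : c s(u, v) = i) (hx : ∀ j, c s(u, x j) = i) (hy : ∀ j, c s(v, y j) = i) :
    HasMonoCopy (doubleStar n m) c := by
  set f : Fin (n + m + 2) → Fin N := Fin.cons u (Fin.cons v (Fin.append x y)) with hf
  refine ⟨⟨f, hinj⟩, i, fun a b hab => ?_⟩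
  have key : ∀ a b : Fin (n + m + 2), ((a.val = 0 ∧ b.val = 1) ∨
      (a.val = 0 ∧ 2 ≤ b.val ∧ b.val ≤ n + 1) ∨ (a.val = 1 ∧ n + 2 ≤ b.val)) →
      c s(f a, f b) = i := by
    rintro a b (⟨ha, hb⟩ | ⟨ha, hb, hb'⟩ | ⟨ha, hb⟩)
    · rw [show a = 0 from Fin.ext ha, show b = (0 : Fin (n + m + 1)).succ from Fin.ext hb]
      simpa [hf] using huv
    · rw [show a = 0 from Fin.ext ha,
        show b = (Fin.castAdd m ⟨b.val - 2, by omega⟩).succ.succ from Fin.ext (by simp; omega)]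
      rw [hf, Fin.cons_zero, Fin.cons_succ, Fin.cons_succ, Fin.append_left]
      exact hx _
    · rw [show a = (0 : Fin (n + m + 1)).succ from Fin.ext ha,
        show b = (Fin.natAdd n ⟨b.val - (n + 2), by omega⟩).succ.succ from
          Fin.ext (by simp; omega)]
      rw [hf, Fin.cons_succ, Fin.cons_zero, Fin.cons_succ, Fin.cons_succ, Fin.append_right]
      exact hy _
  obtain ⟨-, hab | hab⟩ := (fromRel_adj _ _ _).1 hab
  · exact key a b hab
  · rw [Sym2.eq_swap]; exact key b a hab

variable [DecidableEq α]

def colorNbhd (c : Sym2 (Fin N) → α) (i : α) (v : Fin N) : Finset (Fin N) :=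
  {w | w ≠ v ∧ c s(v, w) = i}

lemma hasMonoCopy_doubleStar_of_le_card_colorNbhd (c : Sym2 (Fin N) → α) {i : α} {u v : Fin N}
    (huv : u ≠ v) (hc : c s(u, v) = i) (hu : n + m + 1 ≤ #(colorNbhd c i u))
    (hv : m + 1 ≤ #(colorNbhd c i v)) : HasMonoCopy (doubleStar n m) c := by
  obtain ⟨Y, hYsub, hY⟩ := exists_subset_card_eq (s := (colorNbhd c i v).erase u) (n := m)
    (by have := pred_card_le_card_erase (a := u) (s := colorNbhd c i v); omega)
  obtain ⟨X, hXsub, hX⟩ := exists_subset_card_eq (s := (colorNbhd c i u).erase v \ Y) (n := n)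
    (by
      have := le_card_sdiff Y ((colorNbhd c i u).erase v)
      have := pred_card_le_card_erase (a := v) (s := colorNbhd c i u)
      omega)
  have hXmem : ∀ w ∈ X, w ≠ v ∧ w ≠ u ∧ c s(u, w) = i ∧ w ∉ Y := fun w hw => by
    simpa [colorNbhd, and_assoc] using hXsub hw
  have hYmem : ∀ w ∈ Y, w ≠ u ∧ w ≠ v ∧ c s(v, w) = i := fun w hw => by
    simpa [colorNbhd] using hYsub hw
  let x := X.orderEmbOfFin hX
  let y := Y.orderEmbOfFin hY
  have hx := fun j => hXmem _ (X.orderEmbOfFin_mem hX j)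
  have hy := fun j => hYmem _ (Y.orderEmbOfFin_mem hY j)
  have happ : ∀ j, Fin.append x y j ≠ u ∧ Fin.append x y j ≠ v := fun j => by
    refine Fin.addCases (fun j => ?_) (fun j => ?_) j
    · rw [Fin.append_left]; exact ⟨(hx j).2.1, (hx j).1⟩
    · rw [Fin.append_right]; exact ⟨(hy j).1, (hy j).2.1⟩
  refine hasMonoCopy_doubleStar_of_injective c (x := x) (y := y) ?_ hc (fun j => (hx j).2.2.1)
    (fun j => (hy j).2.2)
  refine Fin.cons_injective_iff.2 ⟨?_, Fin.cons_injective_iff.2 ⟨?_,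
    Fin.append_injective_iff.2 ⟨x.injective, y.injective, fun j j' h => ?_⟩⟩⟩
  · rintro ⟨j, hj⟩
    refine Fin.cases (fun h => huv ?_) (fun j h => (happ j).1 ?_) j hj
    · simpa using h.symm
    · simpa using h
  · rintro ⟨j, hj⟩
    exact (happ j).2 hj
  · exact (hx j).2.2.2 (h ▸ Y.orderEmbOfFin_mem hY j')

end DoubleStar

lemma card_sub_one_le_of_small_colorNbhd {N k : ℕ} (c : Sym2 (Fin N) → Fin k) (d : ℕ)
    (hsmall : ∀ v w, v ≠ w →
      #(colorNbhd c (c s(v, w)) v) ≤ d ∨ #(colorNbhd c (c s(v, w)) w) ≤ d) :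
    N - 1 ≤ 2 * k * d := by
  -- Every edge `vw` lies in `L v` or in `L w`, and `L v` meets each colour class at `v` in at most
  -- `d` vertices.
  let L : Fin N → Finset (Fin N) := fun v => {w | w ≠ v ∧ #(colorNbhd c (c s(v, w)) v) ≤ d}
  have hL : ∀ v, #(L v) ≤ k * d := fun v => by
    rw [card_eq_sum_card_fiberwise (f := fun w => c s(v, w)) (t := univ) (fun _ _ => mem_univ _)]
    refine (sum_le_card_nsmul _ _ d fun i _ => ?_).trans (by simp)
    by_cases hne : ({w ∈ L v | c s(v, w) = i} : Finset _).Nonempty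
    · obtain ⟨w, hw⟩ := hne
      simp only [L, mem_filter, mem_univ, true_and] at hw
      refine (card_le_card fun w' hw' => ?_).trans (hw.2 ▸ hw.1.2)
      simp only [L, mem_filter, mem_univ, true_and] at hw'
      simp [colorNbhd, hw'.1.1, hw'.2]
    · simp [not_nonempty_iff_eq_empty.1 hne]
  have hcover : ∀ v, N - 1 ≤ #(L v) + #{w | v ∈ L w} := fun v => by
    refine le_trans ?_ (card_union_le _ _)
    refine le_trans (by simp [filter_ne']) (card_le_card (s := {w | w ≠ v}) fun w hw => ?_)
    simp only [mem_filter, mem_univ, true_and] at hw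
    rcases hsmall v w (Ne.symm hw) with h | h
    · simp [L, hw, h]
    · simp [L, Ne.symm hw, Sym2.eq_swap, h]
  have hswap : ∑ v, #({w | v ∈ L w} : Finset _) = ∑ v, #(L v) := by
    have := sum_card_bipartiteAbove_eq_sum_card_bipartiteBelow (s := univ) (t := univ)
      (r := fun v w => w ∈ L v)
    simpa [bipartiteAbove, bipartiteBelow, filter_mem_eq_inter] using this.symm
  have : N * (N - 1) ≤ N * (2 * k * d) := by
    calc N * (N - 1) = ∑ _v : Fin N, (N - 1) := by simp
      _ ≤ ∑ v, (#(L v) + #({w | v ∈ L w} : Finset _)) := sum_le_sum fun v _ => hcover v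
      _ = 2 * ∑ v, #(L v) := by rw [sum_add_distrib, hswap, two_mul]
      _ ≤ 2 * ∑ _v : Fin N, k * d := Nat.mul_le_mul_left 2 (sum_le_sum fun v _ => hL v)
      _ = N * (2 * k * d) := by simp; ring
  rcases Nat.eq_zero_or_pos N with rfl | hN
  · simp
  · exact Nat.le_of_mul_le_mul_left this hN

lemma isRamsey_doubleStar {n m : ℕ} (k : ℕ) :
    IsRamsey (doubleStar n m) k (2 * k * (n + m) + 2) := by
  intro c
  by_contra hno
  have := card_sub_one_le_of_small_colorNbhd c (n + m) fun v w hvw => by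
    by_contra! h
    exact hno (hasMonoCopy_doubleStar_of_le_card_colorNbhd c hvw rfl (by omega) (by omega))
  omega

section Orient

variable {q : ℕ} {G : Type} [AddCommGroup G]

def orient (l : ZMod q × G) : ZMod q × G := if 2 * l.1.val < q then l else -l

lemma orient_eq_or_eq_neg (l : ZMod q × G) : orient l = l ∨ orient l = -l := by
  unfold orient; split_ifs <;> simp

lemma fst_orient_mk (δ : ZMod q) (d : G) :
    (orient (δ, d)).1 = if 2 * δ.val < q then δ else -δ := by
  unfold orient; split_ifs <;> rfl

lemma orient_mk_injective (δ : ZMod q) : Function.Injective fun d : G => orient (δ, d) := by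
  intro d d' h
  simp only [orient] at h
  split_ifs at h <;> simpa using h

lemma fst_orient_ne_zero {l : ZMod q × G} (hl : l.1 ≠ 0) : (orient l).1 ≠ 0 := by
  rcases orient_eq_or_eq_neg l with h | h <;> simp [h, hl]

lemma orient_snd_ne {l : ZMod q × ZMod q} (h0 : l.2 ≠ 0) (h1 : l.2 ≠ l.1) :
    (orient l).2 ≠ 0 ∧ (orient l).2 ≠ (orient l).1 := by
  rcases orient_eq_or_eq_neg l with h | h <;> simp [h, h0, h1]

variable (hq : Odd q)
include hq

-- For odd `q` and `a ≠ 0`, exactly one of `a` and `-a` satisfies `2 * val < q`.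
lemma orient_neg {l : ZMod q × G} (hl : l.1 ≠ 0) : orient (-l) = orient l := by
  have : NeZero q := ⟨by rintro rfl; simp at hq⟩
  have hv : (-l.1).val = q - l.1.val := by rw [ZMod.neg_val, if_neg hl]
  have := ZMod.val_lt l.1
  obtain ⟨r, rfl⟩ := hq
  unfold orient
  rw [Prod.fst_neg, hv]
  split_ifs <;> first | omega | simp

lemma two_mul_val_fst_orient_lt {l : ZMod q × G} (hl : l.1 ≠ 0) :
    2 * (orient l).1.val < q := by
  have : NeZero q := ⟨by rintro rfl; simp at hq⟩
  have hv : (-l.1).val = q - l.1.val := by rw [ZMod.neg_val, if_neg hl]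
  have := ZMod.val_lt l.1
  obtain ⟨r, rfl⟩ := hq
  unfold orient
  split_ifs with h
  · exact h
  · rw [Prod.fst_neg, hv]; omega

end Orient

lemma Set.ncard_le_of_injOn_snd {α β : Type} [Finite β] {S : Set (α × β)}
    (h : S.InjOn Prod.snd) : S.ncard ≤ Nat.card β :=
  (Set.ncard_le_ncard_of_injOn Prod.snd (fun _ _ => Set.mem_univ _) h Set.finite_univ).trans
    (Set.ncard_univ β).le

lemma Set.ncard_fst_eq_le {α : Type} (s : ℕ) [NeZero s] (z : α) :
    {x : α × ZMod s | x.1 = z}.ncard ≤ s := by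
  simpa using Set.ncard_le_of_injOn_snd (S := {x : α × ZMod s | x.1 = z})
    fun x hx y hy h => Prod.ext (hx.trans hy.symm) h

section CayleyColouring

variable (q s : ℕ) [NeZero q] [NeZero s]

def cayleyLabelling (hq : Odd q) :
    BlockLabelling (ZMod q × ZMod s) (ZMod q × ZMod s) 1 s 2 where
  blk x y := if x.1 = y.1 then some 0 else none
  blk_comm x y := by simp only [eq_comm]
  blocks _ := ⟨ZMod q, Prod.fst, fun x y h => by by_contra hxy; simp [hxy] at h,
    Set.ncard_fst_eq_le s⟩
  label x y := orient (x - y)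
  label_comm x y h := by
    have hxy : x.1 ≠ y.1 := by simpa using h
    rw [← neg_sub, orient_neg hq]
    simpa [sub_eq_zero] using hxy.symm
  labels := ({a : ZMod q | a ≠ 0 ∧ 2 * a.val < q} : Finset _) ×ˢ (univ : Finset (ZMod s))
  label_mem x y h := by
    have hxy : (x - y).1 ≠ 0 := sub_ne_zero.2 (by simpa using h)
    simp [fst_orient_ne_zero hxy, two_mul_val_fst_orient_lt hq hxy]
  card_label_le x l := by
    refine (card_le_card fun y hy => ?_).trans (card_le_two (a := x - l) (b := x + l))
    simp only [mem_filter, mem_univ, true_and] at hy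
    rcases orient_eq_or_eq_neg (x - y) with h | h <;> rw [hy.2] at h <;> simp [h]

lemma card_cayleyLabelling_labels_le (hq : Odd q) :
    #(cayleyLabelling q s hq).labels ≤ q / 2 * s := by
  rw [cayleyLabelling, card_product, card_univ, ZMod.card]
  refine Nat.mul_le_mul_right s ((card_le_card_of_injOn ZMod.val (t := Ioc 0 (q / 2))
    (fun a ha => ?_) ((ZMod.val_injective q).injOn)).trans (Nat.card_Ioc 0 (q / 2)).le)
  simp only [coe_filter, mem_univ, true_and, Set.mem_ofPred_eq] at ha
  simp only [coe_Ioc, Set.mem_Ioc]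
  exact ⟨Nat.pos_of_ne_zero ((ZMod.val_ne_zero a).2 ha.1), by omega⟩

end CayleyColouring

theorem not_isRamsey_doubleStar_of_even {n m t : ℕ} (hn : Even n) (hn0 : 0 < n) :
    ¬ IsRamsey (doubleStar n m) (t * (n + m + 1) + 1) ((t * n + 1) * (n + m + 1)) := by
  obtain ⟨h, rfl⟩ := hn
  have hq : Odd (t * (h + h) + 1) := ⟨t * h, by ring⟩
  have := (cayleyLabelling (t * (h + h) + 1) (h + h + m + 1) hq).not_isRamsey_doubleStar
    (g := h) (R := t * (h + h + m + 1)) (by omega) (by omega)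
    ((card_cayleyLabelling_labels_le _ _ hq).trans (by
      rw [show (t * (h + h) + 1) / 2 = t * h by rw [← two_mul, mul_left_comm]; omega]
      exact (mul_right_comm _ _ _).le))
  simpa [add_comm] using this

section RoundRobin

variable {r : ℕ}

def roundRobin : Option (ZMod r) → Option (ZMod r) → ZMod r
  | some a, some b => a + b
  | some a, none => 2 * a
  | none, some b => 2 * b
  | none, none => 0

lemma roundRobin_comm (x y : Option (ZMod r)) : roundRobin x y = roundRobin y x := by
  cases x <;> cases y <;> simp [roundRobin, add_comm]

lemma roundRobin_left_injOn (hr : Odd r) (x : Option (ZMod r)) :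
    {y | y ≠ x}.InjOn (roundRobin x) := by
  have h2 : IsUnit (2 : ZMod r) := by
    exact_mod_cast (ZMod.isUnit_iff_coprime 2 r).2 (Nat.coprime_two_left.2 hr)
  intro y hy y' hy' h
  simp only [Set.mem_ofPred_eq] at hy hy'
  cases x <;> cases y <;> cases y' <;> simp_all [roundRobin, h2.mul_right_inj]
  all_goals rw [two_mul] at h; simp_all

variable (r) in
def roundRobinLabelling (s : ℕ) [NeZero r] [NeZero s] (hr : Odd r) :
    BlockLabelling (Option (ZMod r) × ZMod s) (ZMod r × ZMod s) 1 s 1 where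
  blk x y := if x.1 = y.1 then some 0 else none
  blk_comm x y := by simp only [eq_comm]
  blocks _ := ⟨Option (ZMod r), Prod.fst, fun x y h => by by_contra hxy; simp [hxy] at h,
    Set.ncard_fst_eq_le s⟩
  label x y := (roundRobin x.1 y.1, x.2 + y.2)
  label_comm x y _ := by rw [roundRobin_comm, add_comm]
  labels := univ
  label_mem _ _ _ := mem_univ _
  card_label_le x l := by
    refine card_le_one.2 fun y hy y' hy' => ?_
    simp only [mem_filter, mem_univ, true_and, ite_eq_right_iff, reduceCtorEq, imp_false] at hy hy'
    have h := hy.2.trans hy'.2.symm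
    simp only [Prod.mk.injEq, add_right_inj] at h
    exact Prod.ext (roundRobin_left_injOn hr x.1 (Ne.symm hy.1) (Ne.symm hy'.1) h.1) h.2

end RoundRobin

theorem not_isRamsey_doubleStar_of_odd_mul {n m t : ℕ} (h : Odd (t * n)) :
    ¬ IsRamsey (doubleStar n m) (t * (n + m + 1) + 1) ((t * n + 1) * (n + m + 1)) := by
  have hn : 0 < n := Nat.pos_of_ne_zero (by rintro rfl; simp at h)
  have : NeZero (t * n) := ⟨by rintro h'; simp [h'] at h⟩
  have := (roundRobinLabelling (t * n) (n + m + 1) h).not_isRamsey_doubleStar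
    (g := n) (R := t * (n + m + 1)) hn (by omega)
    (by simp [roundRobinLabelling, ZMod.card, mul_right_comm])
  simpa [add_comm] using this

section SkewColouring

variable {q s : ℕ}

-- The (`0`-based) position of `d` in `1, …, q - 1` with `δ` removed.
def indexAvoiding (δ d : ZMod q) : ℕ := d.val - 1 - if δ.val < d.val then 1 else 0

lemma indexAvoiding_lt [NeZero q] {δ d : ZMod q} (hδ : δ ≠ 0) (hd : d ≠ 0) (hdδ : d ≠ δ) :
    indexAvoiding δ d < q - 2 := by
  have := (ZMod.val_ne_zero δ).2 hδ
  have := (ZMod.val_ne_zero d).2 hd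
  have := (ZMod.val_injective q).ne hdδ
  have := ZMod.val_lt d
  have := ZMod.val_lt δ
  unfold indexAvoiding
  split_ifs <;> omega

lemma indexAvoiding_injOn [NeZero q] {δ : ZMod q} (hδ : δ ≠ 0) :
    {d | d ≠ 0 ∧ d ≠ δ}.InjOn (indexAvoiding δ) := by
  rintro d ⟨hd, hdδ⟩ d' ⟨hd', hdδ'⟩ h
  have := (ZMod.val_ne_zero d).2 hd
  have := (ZMod.val_ne_zero d').2 hd'
  have := (ZMod.val_ne_zero δ).2 hδ
  have := (ZMod.val_injective q).ne hdδ
  have := (ZMod.val_injective q).ne hdδ'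
  apply ZMod.val_injective q
  unfold indexAvoiding at h
  split_ifs at h <;> omega

lemma natCast_val_injective [NeZero s] (hsq : s ≤ q) :
    Function.Injective fun b : ZMod s => (b.val : ZMod q) :=
  fun b b' h => ZMod.val_injective s <| by
    have := congrArg ZMod.val h
    rwa [ZMod.val_natCast_of_lt ((ZMod.val_lt b).trans_le hsq),
      ZMod.val_natCast_of_lt ((ZMod.val_lt b').trans_le hsq)] at this

variable (q s) in
def skewDiag (x : ZMod q × ZMod s) : ZMod q := x.1 - (x.2.val : ZMod q)

/- Between distinct rows the differences `0` (same column) and `δ` (same diagonal) are excluded,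
leaving `q - 2` values; orienting the pair so that `δ` is small makes the label symmetric.
Within a row the sum `x₁ + y₁` avoids only one value, so two of its values get labels of their
own. -/
variable (q s) in
def skewLabel (x y : ZMod q × ZMod s) : (ZMod s × ℕ) ⊕ ZMod q :=
  if x.2 = y.2 then
    if x.1 + y.1 = 0 ∨ x.1 + y.1 = 1 then .inr (x.1 + y.1)
    else .inl (x.2 + y.2, indexAvoiding 1 (x.1 + y.1))
  else
    let o := orient ((x.2.val : ZMod q) - (y.2.val : ZMod q), x.1 - y.1)
    .inl (x.2 + y.2, indexAvoiding o.1 o.2)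

lemma sub_ne_natCast_sub_of_skewDiag_ne {x y : ZMod q × ZMod s}
    (h : skewDiag q s x ≠ skewDiag q s y) :
    x.1 - y.1 ≠ (x.2.val : ZMod q) - (y.2.val : ZMod q) := by
  rwa [ne_eq, sub_eq_sub_iff_sub_eq_sub]

variable [NeZero s] (hsq : s ≤ q)
include hsq

lemma skewLabel_comm (hq : Odd q) (x y : ZMod q × ZMod s) :
    skewLabel q s x y = skewLabel q s y x := by
  by_cases h2 : x.2 = y.2
  · simp only [skewLabel, h2, ↓reduceIte, add_comm x.1]
  · have hδ : (x.2.val : ZMod q) - (y.2.val : ZMod q) ≠ 0 :=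
      sub_ne_zero.2 ((natCast_val_injective hsq).ne h2)
    simp only [skewLabel, if_neg h2, if_neg (Ne.symm h2), add_comm y.2]
    rw [← neg_sub (x.2.val : ZMod q) (y.2.val : ZMod q), ← neg_sub x.1 y.1, ← Prod.neg_mk,
      orient_neg hq hδ]

variable [NeZero q]

lemma skewLabel_mem {x y : ZMod q × ZMod s} (hxy : x.1 ≠ y.1)
    (hdiag : skewDiag q s x ≠ skewDiag q s y) :
    skewLabel q s x y ∈ ((univ : Finset (ZMod s)) ×ˢ range (q - 2)).disjSum {0, 1} := by
  have h1 : (1 : ZMod q) ≠ 0 := by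
    have := nontrivial_of_ne _ _ hxy
    exact one_ne_zero
  unfold skewLabel
  split_ifs with h2 hγ
  · simpa using hγ
  · push Not at hγ
    simpa using indexAvoiding_lt h1 hγ.1 hγ.2
  · have hδ : (x.2.val : ZMod q) - (y.2.val : ZMod q) ≠ 0 :=
      sub_ne_zero.2 ((natCast_val_injective hsq).ne h2)
    have := orient_snd_ne (l := (_, x.1 - y.1)) (sub_ne_zero.2 hxy)
      (sub_ne_natCast_sub_of_skewDiag_ne hdiag)
    simpa using indexAvoiding_lt (fst_orient_ne_zero hδ) this.1 this.2

lemma skewLabel_injOn (x : ZMod q × ZMod s) :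
    {y | x.1 ≠ y.1 ∧ skewDiag q s x ≠ skewDiag q s y}.InjOn (skewLabel q s x) := by
  rintro y ⟨hy1, hyd⟩ y' ⟨hy1', hyd'⟩ h
  have h1 : (1 : ZMod q) ≠ 0 := by
    have := nontrivial_of_ne _ _ hy1
    exact one_ne_zero
  have hsnd : y.2 = y'.2 := by
    unfold skewLabel at h
    split_ifs at h <;> simp_all
  obtain ⟨y1, y2⟩ := y
  obtain ⟨y1', y2'⟩ := y'
  obtain rfl : y2 = y2' := hsnd
  simp only [Prod.mk.injEq, and_true]
  by_cases h2 : x.2 = y2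
  · simp only [skewLabel, h2, ↓reduceIte] at h
    split_ifs at h with hγ hγ' hγ'
    · simpa using h
    · push Not at hγ hγ'
      simpa using indexAvoiding_injOn h1 hγ hγ' (by simpa using h)
  · simp only [skewLabel, h2, ↓reduceIte, Sum.inl.injEq, Prod.mk.injEq, true_and] at h
    set δ : ZMod q := (x.2.val : ZMod q) - (y2.val : ZMod q)
    have hδ : δ ≠ 0 := sub_ne_zero.2 ((natCast_val_injective hsq).ne h2)
    have ho : (orient (δ, x.1 - y1)).2 ≠ 0 ∧ _ := orient_snd_ne (sub_ne_zero.2 hy1)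
      (sub_ne_natCast_sub_of_skewDiag_ne hyd)
    have ho' : (orient (δ, x.1 - y1')).2 ≠ 0 ∧ _ := orient_snd_ne (sub_ne_zero.2 hy1')
      (sub_ne_natCast_sub_of_skewDiag_ne hyd')
    have hfst : (orient (δ, x.1 - y1')).1 = (orient (δ, x.1 - y1)).1 := by
      rw [fst_orient_mk, fst_orient_mk]
    rw [hfst] at h ho'
    have hsnd := indexAvoiding_injOn (fst_orient_ne_zero hδ) ho ho' h
    simpa using orient_mk_injective _ (Prod.ext hfst.symm hsnd)

variable (q s) in
def skewLabelling (hq : Odd q) :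
    BlockLabelling (ZMod q × ZMod s) ((ZMod s × ℕ) ⊕ ZMod q) 2 s 1 where
  blk x y := if x.1 = y.1 then some 0 else if skewDiag q s x = skewDiag q s y then some 1 else none
  blk_comm x y := by simp only [eq_comm]
  blocks
    | 0 => ⟨ZMod q, Prod.fst, fun x y h => by by_contra hxy; simp [hxy] at h,
        Set.ncard_fst_eq_le s⟩
    | 1 => ⟨ZMod q, skewDiag q s, fun x y h => by by_contra hd; simp [hd] at h, fun z => by
        simpa using Set.ncard_le_of_injOn_snd (S := {x | skewDiag q s x = z})
          fun x hx y hy h => Prod.ext (by simpa [skewDiag, h] using hx.trans hy.symm) h⟩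
  label := skewLabel q s
  label_comm x y _ := skewLabel_comm hsq hq x y
  labels := ((univ : Finset (ZMod s)) ×ˢ range (q - 2)).disjSum {0, 1}
  label_mem x y h := by
    split_ifs at h with h1 h2
    exact skewLabel_mem hsq h1 h2
  card_label_le x l := by
    have off : ∀ y, (if x.1 = y.1 then some 0 else
        if skewDiag q s x = skewDiag q s y then some 1 else none) = (none : Option (Fin 2)) →
        x.1 ≠ y.1 ∧ skewDiag q s x ≠ skewDiag q s y := fun y h => by
      split_ifs at h with h1 h2
      exact ⟨h1, h2⟩
    refine card_le_one.2 fun y hy y' hy' => ?_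
    simp only [mem_filter, mem_univ, true_and] at hy hy'
    exact skewLabel_injOn hsq x (off y hy.1) (off y' hy'.1) (hy.2.trans hy'.2.symm)

end SkewColouring

theorem not_isRamsey_doubleStar_of_even_mul {n m t : ℕ} (h : Even (t * n)) (hn : 0 < n)
    (hm : 0 < m) (hs : n + m + 1 ≤ t * n + 1) :
    ¬ IsRamsey (doubleStar n m) (t * (n + m + 1) + 1) ((t * n + 1) * (n + m + 1)) := by
  have hq : Odd (t * n + 1) := h.add_one
  have hts : 1 ≤ t * (n + m + 1) := by rw [mul_add, mul_add]; omega
  have hcard : #(skewLabelling (t * n + 1) (n + m + 1) hs hq).labels ≤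
      (t * (n + m + 1) - 1) * n := by
    simp only [skewLabelling, card_disjSum, card_product, card_univ, ZMod.card, card_range]
    refine (Nat.add_le_add_left (card_insert_le _ _) _).trans ?_
    rw [card_singleton]
    zify [show 2 ≤ t * n + 1 by omega, hts]
    nlinarith
  have := (skewLabelling (t * n + 1) (n + m + 1) hs hq).not_isRamsey_doubleStar
    (g := n) hn (by omega) hcard
  rwa [show 2 + (t * (n + m + 1) - 1) = t * (n + m + 1) + 1 by omega, Fintype.card_prod,
    ZMod.card, ZMod.card] at this

theorem stmt_5_general (n m k : ℕ) (hnm : m ≤ n) (hm : 1 ≤ m) (hk : 2 ≤ k)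
    (hdvd : (n + m + 1) ∣ (k - 1)) :
    ramseyNumber (doubleStar n m) k ≥ k * n + m + 2 := by
  obtain ⟨t, ht⟩ := hdvd
  have hkt : k = t * (n + m + 1) + 1 := by rw [mul_comm] at ht; omega
  have hnot : ¬ IsRamsey (doubleStar n m) k (k * n + m + 1) := by
    rw [show k * n + m + 1 = (t * n + 1) * (n + m + 1) by rw [hkt]; ring, hkt]
    rcases Nat.even_or_odd n with hn | hn
    · exact not_isRamsey_doubleStar_of_even hn (by omega)
    rcases Nat.even_or_odd t with ht | ht
    · have : t ≠ 0 := by rintro rfl; omega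
      have : 2 ≤ t := by obtain ⟨r, rfl⟩ := ht; omega
      exact not_isRamsey_doubleStar_of_even_mul (ht.mul_right n) (by omega) hm
        (by nlinarith)
    · exact not_isRamsey_doubleStar_of_odd_mul (ht.mul hn)
  have hR : IsRamsey (doubleStar n m) k (ramseyNumber (doubleStar n m) k) :=
    Nat.sInf_mem (s := {N | IsRamsey (doubleStar n m) k N}) ⟨_, isRamsey_doubleStar k⟩
  by_contra! hlt
  exact hnot (hR.mono (by omega))

/-- If `n ≥ m ≥ 1`, `k ≥ 2`, `n + m + 1` divides `k − 1`, and `n` is even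
or `m` is odd, then `r(S(n,m); k) ≥ kn + m + 2`. -/
theorem stmt_5 (n m k : ℕ) (hnm : m ≤ n) (hm : 1 ≤ m) (hk : 2 ≤ k)
    (hdvd : (n + m + 1) ∣ (k - 1)) (hpar : Even n ∨ Odd m) :
    ramseyNumber (doubleStar n m) k ≥ k * n + m + 2 :=
  stmt_5_general n m k hnm hm hk hdvd
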